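/- arXiv:2108.13242 — 2 statements merged into one kernel-verified Lean document; each statement's English description precedes it below -/
import Mathlib

section
/- Let n ≥ 1, fix an aperture γ > 1, let 0 < p, q < ∞ and s > 0, and let μ be a positive Borel measure on Bn. If A_{μ,s} : H^p → L^q(Sn) is bounded, then for every positive integer m the operator A_{μ,ms} : H^{mp} → L^{mq}(Sn) is bounded, and ‖A_{μ,ms}‖_{H^{mp}→L^{mq}(Sn)} ≤ ‖A_{μ,s}‖_{H^p→L^q(Sn)}^{1/m}. -/
open MeasureTheory Metric Set
open scoped ENNReal

noncomputable section

instance CnMeasurableSpace (n : ℕ) : MeasurableSpace (EuclideanSpace ℂ (Fin n)) := borel _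
instance CnBorelSpace (n : ℕ) : BorelSpace (EuclideanSpace ℂ (Fin n)) := ⟨rfl⟩

/-- `ℂⁿ` as a Euclidean space. -/
abbrev Cn (n : ℕ) := EuclideanSpace ℂ (Fin n)

/-- The open unit ball of `ℂⁿ`. -/
def Bn (n : ℕ) : Set (Cn n) := Metric.ball 0 1

/-- The unit sphere of `ℂⁿ`. -/
def Sph (n : ℕ) : Set (Cn n) := Metric.sphere 0 1

/-- The normalized surface measure on the unit sphere `Sph n`, realized as a Borel measure
on `ℂⁿ`: the pushforward of normalized Lebesgue measure on the punctured unit ball under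
the radial projection `z ↦ z/‖z‖`.  It is supported on the sphere and has total mass 1. -/
def sphMeasure (n : ℕ) : Measure (Cn n) :=
  (volume (Bn n))⁻¹ • Measure.map (fun z => ‖z‖⁻¹ • z) (volume.restrict (Bn n \ {0}))

/-- Korányi admissible approach region `Γ_γ(ζ)` of aperture `γ`. -/
def Koranyi (n : ℕ) (γ : ℝ) (ζ : Cn n) : Set (Cn n) :=
  {z | z ∈ Bn n ∧ ‖1 - (inner ℂ z ζ : ℂ)‖ < γ / 2 * (1 - ‖z‖ ^ 2)}

/-- The Hardy norm `‖f‖_{H^p}`, valued in `ℝ≥0∞`. -/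
def hardyNorm (n : ℕ) (p : ℝ) (f : Cn n → ℂ) : ℝ≥0∞ :=
  (⨆ r : Ioo (0 : ℝ) 1,
    ∫⁻ ζ, ENNReal.ofReal (‖f ((r : ℝ) • ζ)‖ ^ p) ∂sphMeasure n) ^ (1 / p)

/-- Membership in the Hardy space `H^p`. -/
def MemHp (n : ℕ) (p : ℝ) (f : Cn n → ℂ) : Prop :=
  DifferentiableOn ℂ f (Bn n) ∧ hardyNorm n p f < ∞

/-- The `L^q` norm (w.r.t. normalized surface measure) of an `ℝ≥0∞`-valued function. -/
def lqNorm (n : ℕ) (q : ℝ) (h : Cn n → ℝ≥0∞) : ℝ≥0∞ :=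
  (∫⁻ ζ, h ζ ^ q ∂sphMeasure n) ^ (1 / q)

/-- The area operator `A_{μ,s} f(ζ)`. -/
def areaOp (n : ℕ) (γ s : ℝ) (μ : Measure (Cn n)) (f : Cn n → ℂ) (ζ : Cn n) : ℝ≥0∞ :=
  (∫⁻ z in Koranyi n γ ζ,
      ENNReal.ofReal (‖f z‖ ^ s / (1 - ‖z‖ ^ 2) ^ n) ∂μ) ^ (1 / s)

/-- `A_{μ,s} : H^p → L^q(Sn)` is bounded. -/
def BddArea (n : ℕ) (γ p q s : ℝ) (μ : Measure (Cn n)) : Prop :=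
  ∃ C : ℝ, 0 < C ∧
    ∀ f : Cn n → ℂ, MemHp n p f →
      lqNorm n q (areaOp n γ s μ f) ≤ ENNReal.ofReal C * hardyNorm n p f

/-- Operator norm of `A_{μ,s} : H^p → L^q(Sn)` (the least admissible constant). -/
def areaOpNorm (n : ℕ) (γ p q s : ℝ) (μ : Measure (Cn n)) : ℝ≥0∞ :=
  sInf {C : ℝ≥0∞ | ∀ f : Cn n → ℂ, MemHp n p f →
    lqNorm n q (areaOp n γ s μ f) ≤ C * hardyNorm n p f}

/-- Non-isotropic ball `B_δ(ξ)`. -/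
def nonisoBall (n : ℕ) (δ : ℝ) (ξ : Cn n) : Set (Cn n) :=
  {z | z ∈ Bn n ∧ ‖1 - (inner ℂ z ξ : ℂ)‖ < δ}

/-- Carleson constant `‖μ‖_{CM_α}`. -/
def carlesonNorm (n : ℕ) (α : ℝ) (μ : Measure (Cn n)) : ℝ≥0∞ :=
  ⨆ (ξ : Cn n) (_ : ξ ∈ Sph n) (δ : ℝ) (_ : 0 < δ),
    μ (nonisoBall n δ ξ) / ENNReal.ofReal (δ ^ ((n : ℝ) * α))

/-- `μ` is an `α`-Carleson measure. -/
def IsCarleson (n : ℕ) (α : ℝ) (μ : Measure (Cn n)) : Prop := carlesonNorm n α μ < ∞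

/-- `μ̃(ζ) = ∫_{Γ_γ(ζ)} (1-|z|²)^{-n} dμ(z)`. -/
def muTilde (n : ℕ) (γ : ℝ) (μ : Measure (Cn n)) (ζ : Cn n) : ℝ≥0∞ :=
  ∫⁻ z in Koranyi n γ ζ, ENNReal.ofReal (((1 - ‖z‖ ^ 2) ^ n)⁻¹) ∂μ

/-- Bergman metric ball `D(a,r)`. -/
def bergmanBall (n : ℕ) (a : Cn n) (r : ℝ) : Set (Cn n) :=
  {z | z ∈ Bn n ∧
    1 - Real.tanh r ^ 2 <
      (1 - ‖a‖ ^ 2) * (1 - ‖z‖ ^ 2) / ‖1 - (inner ℂ z a : ℂ)‖ ^ 2}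

/-- `μ̂_t(z) = μ(D(z,2t))/(1-|z|)^n`. -/
def muHat (n : ℕ) (t : ℝ) (μ : Measure (Cn n)) (z : Cn n) : ℝ≥0∞ :=
  μ (bergmanBall n z (2 * t)) / ENNReal.ofReal ((1 - ‖z‖) ^ n)

/-- The closed support of a measure. -/
def msupport (n : ℕ) (μ : Measure (Cn n)) : Set (Cn n) :=
  {z | ∀ U : Set (Cn n), IsOpen U → z ∈ U → 0 < μ U}

/-- Radial derivative `Rf(z)`: the Fréchet derivative of `f` at `z` applied to `z`. -/
def radialDeriv (n : ℕ) (f : Cn n → ℂ) (z : Cn n) : ℂ := fderiv ℂ f z z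

/-- Normalized volume measure on `ℂⁿ` (so that the unit ball has measure 1). -/
def dvol (n : ℕ) : Measure (Cn n) := (volume (Bn n))⁻¹ • volume

/-- The inner integral in Proposition 1:
`∫_{Γ_γ(ζ) ∩ spt μ} |Rf(z)| μ̂_t(z)^{-1/2} (1-|z|²)^{1-n} dμ(z)`. -/
def prop1Inner (n : ℕ) (γ t : ℝ) (μ : Measure (Cn n)) (f : Cn n → ℂ) (ζ : Cn n) : ℝ≥0∞ :=
  ∫⁻ z in Koranyi n γ ζ ∩ msupport n μ,
    ENNReal.ofReal (‖radialDeriv n f z‖) * muHat n t μ z ^ (-(1 / 2) : ℝ) *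
      ENNReal.ofReal ((1 - ‖z‖ ^ 2) ^ ((1 : ℝ) - (n : ℝ))) ∂μ

/-- The set of admissible constants `C_μ` in condition (ii) of Proposition 1. -/
def prop1Consts (n : ℕ) (γ t τ : ℝ) (μ : Measure (Cn n)) : Set ℝ≥0∞ :=
  {K | ∀ f : Cn n → ℂ, MemHp n τ f →
    (∫⁻ ζ, prop1Inner n γ t μ f ζ ^ (2 * τ / (2 + τ)) ∂sphMeasure n) ≤
      K * hardyNorm n τ f ^ (2 * τ / (2 + τ))}

/-- The integral `∫_{Bn ∩ spt μ} |g|^{p/4} |Rf| μ̂_t^{-1/2} (1-|z|²) dμ` of Corollary 1. -/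
def cor1Int (n : ℕ) (t p : ℝ) (μ : Measure (Cn n)) (g f : Cn n → ℂ) : ℝ≥0∞ :=
  ∫⁻ z in Bn n ∩ msupport n μ,
    ENNReal.ofReal (‖g z‖ ^ (p / 4)) *
      ENNReal.ofReal (‖radialDeriv n f z‖) * muHat n t μ z ^ (-(1 / 2) : ℝ) *
      ENNReal.ofReal (1 - ‖z‖ ^ 2) ∂μ

/-- The set of admissible constants `K_μ` in Corollary 1. -/
def cor1Consts (n : ℕ) (t p : ℝ) (μ : Measure (Cn n)) : Set ℝ≥0∞ :=
  {K | ∀ g f : Cn n → ℂ, MemHp n p g → MemHp n 4 f →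
    cor1Int n t p μ g f ≤ K * hardyNorm n p g ^ (p / 4) * hardyNorm n 4 f}

/-- The integral `∫_{Bn ∩ spt μ} |g|^τ |Rf|^τ μ̂_t^{-τ/2} (1-|z|²)^τ dμ`. -/
def prop2Int (n : ℕ) (t τ : ℝ) (μ : Measure (Cn n)) (g f : Cn n → ℂ) : ℝ≥0∞ :=
  ∫⁻ z in Bn n ∩ msupport n μ,
    ENNReal.ofReal (‖g z‖ ^ τ * ‖radialDeriv n f z‖ ^ τ) *
      muHat n t μ z ^ (-(τ / 2)) * ENNReal.ofReal ((1 - ‖z‖ ^ 2) ^ τ) ∂μ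

/-- Supremum of `prop2Int` over unit-norm functions `f, g` in `H^P`. -/
def prop2Sup (n : ℕ) (t τ P : ℝ) (μ : Measure (Cn n)) : ℝ≥0∞ :=
  ⨆ (f : Cn n → ℂ) (_ : MemHp n P f ∧ hardyNorm n P f = 1)
    (g : Cn n → ℂ) (_ : MemHp n P g ∧ hardyNorm n P g = 1),
    prop2Int n t τ μ g f

/-!
For `f ∈ H^{mp}` the power `f ^ m` lies in `H^p` with `‖f ^ m‖_{H^p} = ‖f‖_{H^{mp}} ^ m`, and
pointwise `A_{μ,s}(f ^ m) = (A_{μ,ms} f) ^ m`. Applying the bound for `A_{μ,s}` to `f ^ m` and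
taking `m`-th roots gives the bound for `A_{μ,ms}` with constant `C ^ (1/m)`; since `x ↦ x ^ (1/m)`
is an order isomorphism of `ℝ≥0∞`, it commutes with the infimum defining the operator norm.
-/

def areaOpConsts (n : ℕ) (γ p q s : ℝ) (μ : Measure (Cn n)) : Set ℝ≥0∞ :=
  {C | ∀ f : Cn n → ℂ, MemHp n p f → lqNorm n q (areaOp n γ s μ f) ≤ C * hardyNorm n p f}

lemma areaOpNorm_eq_sInf (n : ℕ) (γ p q s : ℝ) (μ : Measure (Cn n)) :
    areaOpNorm n γ p q s μ = sInf (areaOpConsts n γ p q s μ) := rfl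

lemma hardyNorm_pow (n : ℕ) (p : ℝ) {m : ℕ} (hm : m ≠ 0) (f : Cn n → ℂ) :
    hardyNorm n p (fun z => f z ^ m) = hardyNorm n ((m : ℝ) * p) f ^ (m : ℝ) := by
  have hm' : (m : ℝ) ≠ 0 := Nat.cast_ne_zero.mpr hm
  simp only [hardyNorm, ← ENNReal.rpow_mul, norm_pow, Real.rpow_natCast_mul (norm_nonneg _)]
  congr 1
  field_simp

lemma MemHp.pow {n : ℕ} {p : ℝ} {m : ℕ} (hm : m ≠ 0) {f : Cn n → ℂ}
    (hf : MemHp n ((m : ℝ) * p) f) : MemHp n p (fun z => f z ^ m) :=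
  ⟨hf.1.pow m, by
    rw [hardyNorm_pow n p hm f]
    exact ENNReal.rpow_lt_top_of_nonneg m.cast_nonneg hf.2.ne⟩

lemma areaOp_natCast_mul_rpow (n : ℕ) (γ s : ℝ) (μ : Measure (Cn n)) {m : ℕ} (hm : m ≠ 0)
    (f : Cn n → ℂ) (ζ : Cn n) :
    areaOp n γ ((m : ℝ) * s) μ f ζ ^ (m : ℝ) = areaOp n γ s μ (fun z => f z ^ m) ζ := by
  have hm' : (m : ℝ) ≠ 0 := Nat.cast_ne_zero.mpr hm
  simp only [areaOp, ← ENNReal.rpow_mul, norm_pow, Real.rpow_natCast_mul (norm_nonneg _)]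
  congr 1
  field_simp

lemma lqNorm_mul {n : ℕ} (q : ℝ) {t : ℝ} (ht : t ≠ 0) (h : Cn n → ℝ≥0∞) :
    lqNorm n (t * q) h = lqNorm n q (fun ζ => h ζ ^ t) ^ (1 / t) := by
  simp only [lqNorm, ← ENNReal.rpow_mul]
  congr 1
  field_simp

lemma rpow_mem_areaOpConsts_natCast_mul {n : ℕ} {γ p q s : ℝ} {μ : Measure (Cn n)} {m : ℕ}
    (hm : m ≠ 0) {C : ℝ≥0∞} (hC : C ∈ areaOpConsts n γ p q s μ) :
    C ^ (1 / (m : ℝ)) ∈ areaOpConsts n γ ((m : ℝ) * p) ((m : ℝ) * q) ((m : ℝ) * s) μ := by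
  intro f hf
  have hm' : (m : ℝ) ≠ 0 := Nat.cast_ne_zero.mpr hm
  calc lqNorm n ((m : ℝ) * q) (areaOp n γ ((m : ℝ) * s) μ f)
      = lqNorm n q (areaOp n γ s μ (fun z => f z ^ m)) ^ (1 / (m : ℝ)) := by
        simp only [lqNorm_mul q hm', areaOp_natCast_mul_rpow n γ s μ hm]
    _ ≤ (C * hardyNorm n p (fun z => f z ^ m)) ^ (1 / (m : ℝ)) := by
        gcongr
        exact hC _ (hf.pow hm)
    _ = C ^ (1 / (m : ℝ)) * hardyNorm n ((m : ℝ) * p) f := by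
        rw [ENNReal.mul_rpow_of_nonneg _ _ (by positivity), hardyNorm_pow n p hm f,
          ← ENNReal.rpow_mul, mul_one_div_cancel hm', ENNReal.rpow_one]

lemma BddArea.natCast_mul {n : ℕ} {γ p q s : ℝ} {μ : Measure (Cn n)} (h : BddArea n γ p q s μ)
    {m : ℕ} (hm : m ≠ 0) : BddArea n γ ((m : ℝ) * p) ((m : ℝ) * q) ((m : ℝ) * s) μ := by
  obtain ⟨C, hC, hCmem⟩ := h
  refine ⟨C ^ (1 / (m : ℝ)), Real.rpow_pos_of_pos hC _, ?_⟩
  rw [← ENNReal.ofReal_rpow_of_pos hC]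
  exact rpow_mem_areaOpConsts_natCast_mul hm hCmem

lemma areaOpNorm_natCast_mul_le (n : ℕ) (γ p q s : ℝ) (μ : Measure (Cn n)) {m : ℕ} (hm : 0 < m) :
    areaOpNorm n γ ((m : ℝ) * p) ((m : ℝ) * q) ((m : ℝ) * s) μ ≤
      areaOpNorm n γ p q s μ ^ (1 / (m : ℝ)) := by
  let root := ENNReal.orderIsoRpow (1 / (m : ℝ)) (by positivity)
  simp only [areaOpNorm_eq_sInf]
  calc sInf (areaOpConsts n γ ((m : ℝ) * p) ((m : ℝ) * q) ((m : ℝ) * s) μ)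
      ≤ sInf (root '' areaOpConsts n γ p q s μ) :=
        sInf_le_sInf (image_subset_iff.2 fun _ hC => rpow_mem_areaOpConsts_natCast_mul hm.ne' hC)
    _ = root (sInf (areaOpConsts n γ p q s μ)) := (map_sInf root _).symm

theorem stmt9_general (n : ℕ) (γ : ℝ) (p q s : ℝ)
    (μ : Measure (Cn n)) (hbdd : BddArea n γ p q s μ) :
    ∀ m : ℕ, 0 < m →
      BddArea n γ ((m : ℝ) * p) ((m : ℝ) * q) ((m : ℝ) * s) μ ∧
      areaOpNorm n γ ((m : ℝ) * p) ((m : ℝ) * q) ((m : ℝ) * s) μ ≤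
        areaOpNorm n γ p q s μ ^ (1 / (m : ℝ)) :=
  fun _ hm => ⟨hbdd.natCast_mul hm.ne', areaOpNorm_natCast_mul_le n γ p q s μ hm⟩

theorem stmt9 (n : ℕ) (hn : 1 ≤ n) (γ : ℝ) (hγ : 1 < γ) (p q s : ℝ)
    (hp : 0 < p) (hq : 0 < q) (hs : 0 < s)
    (μ : Measure (Cn n)) (hμ : μ (Bn n)ᶜ = 0) (hbdd : BddArea n γ p q s μ) :
    ∀ m : ℕ, 0 < m →
      BddArea n γ ((m : ℝ) * p) ((m : ℝ) * q) ((m : ℝ) * s) μ ∧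
      areaOpNorm n γ ((m : ℝ) * p) ((m : ℝ) * q) ((m : ℝ) * s) μ ≤
        areaOpNorm n γ p q s μ ^ (1 / (m : ℝ)) :=
  stmt9_general n γ p q s μ hbdd
end
end

section
/- Let n ≥ 1, t > 0 and N a positive integer. Let {a_k} be a sequence in Bn such that Bn ⊆ ∪_k D(a_k, t) and every point of Bn belongs to at most N of the sets D(a_k, 4t). Then for every finite positive Borel measure μ on Bn: μ(Bn) ≤ N · Σ_{k : μ(D(a_k,4t)) > 0} μ(D(a_k,2t))² / μ(D(a_k,4t)). -/
open MeasureTheory Metric Set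
open scoped ENNReal

noncomputable section

/-!
Covering by the balls `D(a_k, t) ⊆ D(a_k, 2t)` gives `μ(Bn) ≤ ∑ μ(D(a_k, 2t))`, and bounded
overlap gives `∑ μ(D(a_k, 4t)) ≤ N μ(Bn)`. Summing the weighted AM-GM inequality
`2 b ≤ N b² / c + c / N` over `b = μ(D(a_k, 2t))`, `c = μ(D(a_k, 4t))` then yields
`2 μ(Bn) ≤ N ∑ b² / c + μ(Bn)`, and `μ(Bn)` is finite.
-/

open scoped NNReal

theorem ENNReal.two_mul_le_mul_sq_div_add_div (b c : ℝ≥0∞) {x : ℝ≥0∞} (hx₀ : x ≠ 0)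
    (hx : x ≠ ∞) : 2 * b ≤ x * (b ^ 2 / c) + c / x := by
  rcases eq_or_ne c 0 with rfl | hc₀
  · rcases eq_or_ne b 0 with rfl | hb₀
    · simp
    · simp [ENNReal.div_zero (pow_ne_zero 2 hb₀), ENNReal.mul_top hx₀]
  rcases eq_or_ne c ∞ with rfl | hc
  · simp [ENNReal.top_div_of_ne_top hx]
  rcases eq_or_ne b ∞ with rfl | hb
  · simp [ENNReal.top_div_of_ne_top hc, ENNReal.mul_top hx₀]
  lift b to ℝ≥0 using hb
  lift c to ℝ≥0 using hc
  lift x to ℝ≥0 using hx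
  have hc₀' : c ≠ 0 := by exact_mod_cast hc₀
  have hx₀' : x ≠ 0 := by exact_mod_cast hx₀
  rw [← ENNReal.coe_pow, ← ENNReal.coe_div hc₀', ← ENNReal.coe_div hx₀']
  norm_cast
  rw [← NNReal.coe_le_coe]
  push_cast
  have hc' : (0 : ℝ) < c := by positivity
  have hx' : (0 : ℝ) < x := by positivity
  rw [mul_div_assoc', div_add_div _ _ hc'.ne' hx'.ne', le_div_iff₀ (by positivity)]
  nlinarith [sq_nonneg ((x : ℝ) * b - c)]

theorem ENNReal.le_mul_tsum_sq_div_of_tsum_le {ι : Type*} {M C : ℝ≥0∞} {b c : ι → ℝ≥0∞}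
    (hM : M ≠ ∞) (hC : C ≠ ∞) (hbc : ∀ k, b k ≤ c k) (hMb : M ≤ ∑' k, b k)
    (hcM : ∑' k, c k ≤ C * M) :
    M ≤ C * ∑' k : {k // 0 < c k}, b k ^ 2 / c k := by
  rcases eq_or_ne C 0 with rfl | hC₀
  · have hc : ∑' k, c k = 0 := by simpa using hcM
    have hb : ∑' k, b k = 0 := by
      simp only [ENNReal.tsum_eq_zero] at hc ⊢
      exact fun k => nonpos_iff_eq_zero.1 ((hbc k).trans_eq (hc k))
    simpa [hb] using hMb
  -- `c k = 0` forces `b k = 0`, and `0 / 0 = 0` in `ℝ≥0∞`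
  have hsubtype : ∑' k : {k // 0 < c k}, b k ^ 2 / c k = ∑' k, b k ^ 2 / c k := by
    refine tsum_subtype_eq_of_support_subset (f := fun k => b k ^ 2 / c k) (s := {k | 0 < c k})
      fun k hk => (pos_iff_ne_zero.2 fun hck => hk ?_ : 0 < c k)
    simp [nonpos_iff_eq_zero.1 ((hbc k).trans_eq hck)]
  rw [hsubtype]
  have hsum : 2 * M ≤ C * ∑' k, b k ^ 2 / c k + M := calc
    2 * M ≤ 2 * ∑' k, b k := by gcongr
    _ ≤ ∑' k, (C * (b k ^ 2 / c k) + c k / C) := by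
      rw [← ENNReal.tsum_mul_left]
      exact ENNReal.tsum_le_tsum fun k => ENNReal.two_mul_le_mul_sq_div_add_div _ _ hC₀ hC
    _ = C * ∑' k, b k ^ 2 / c k + (∑' k, c k) / C := by
      simp only [div_eq_mul_inv, ENNReal.tsum_add, ENNReal.tsum_mul_left, ENNReal.tsum_mul_right]
    _ ≤ C * ∑' k, b k ^ 2 / c k + M := by
      gcongr
      exact ENNReal.div_le_of_le_mul' hcM
  rw [two_mul] at hsum
  exact (ENNReal.add_le_add_iff_right hM).1 hsum

theorem MeasureTheory.tsum_measure_le_mul_of_encard_le {α ι : Type*} [MeasurableSpace α]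
    [Countable ι] (μ : Measure α) {s : Set α} {B : ι → Set α} {N : ℕ}
    (hB : ∀ k, MeasurableSet (B k)) (hBs : ∀ k, B k ⊆ s)
    (hN : ∀ z ∈ s, {k | z ∈ B k}.encard ≤ N) :
    ∑' k, μ (B k) ≤ N * μ s := by
  have hmult (z : α) :
      ∑' k, (B k).indicator (1 : α → ℝ≥0∞) z = ({k | z ∈ B k}.encard : ℝ≥0∞) := by
    rw [← ENNReal.tsum_set_one, tsum_subtype {k | z ∈ B k} fun _ => 1]
    rfl
  calc ∑' k, μ (B k) = ∫⁻ z, ∑' k, (B k).indicator 1 z ∂μ := by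
        rw [lintegral_tsum fun k => (measurable_one.indicator (hB k)).aemeasurable]
        simp only [lintegral_indicator_one (hB _)]
    _ = ∫⁻ z in s, ∑' k, (B k).indicator 1 z ∂μ := by
        refine (setLIntegral_eq_of_support_subset fun z hz => ?_).symm
        obtain ⟨k, hk⟩ : ∃ k, z ∈ B k := by
          by_contra! h
          simp [indicator_of_notMem (h _)] at hz
        exact hBs k hk
    _ ≤ ∫⁻ _ in s, (N : ℝ≥0∞) ∂μ := setLIntegral_mono measurable_const fun z hz => by
        rw [hmult]; exact_mod_cast hN z hz
    _ = N * μ s := setLIntegral_const s _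

theorem Real.tanh_le_tanh {x y : ℝ} (h : x ≤ y) : Real.tanh x ≤ Real.tanh y := by
  have mem (r : ℝ) : Real.tanh r ∈ Ioo (-1) 1 := ⟨Real.neg_one_lt_tanh r, Real.tanh_lt_one r⟩
  rwa [← Real.artanh_le_artanh_iff (mem x) (mem y), Real.artanh_tanh, Real.artanh_tanh]

theorem bergmanBall_subset_Bn (n : ℕ) (a : Cn n) (r : ℝ) : bergmanBall n a r ⊆ Bn n :=
  fun _ hz => hz.1

theorem bergmanBall_mono (n : ℕ) (a : Cn n) {r r' : ℝ} (hr : 0 ≤ r) (h : r ≤ r') :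
    bergmanBall n a r ⊆ bergmanBall n a r' := by
  refine fun z hz => ⟨hz.1, lt_of_le_of_lt ?_ hz.2⟩
  have htanh : 0 ≤ Real.tanh r := Real.tanh_zero ▸ Real.tanh_le_tanh hr
  gcongr
  exact Real.tanh_le_tanh h

theorem measurableSet_bergmanBall (n : ℕ) (a : Cn n) (r : ℝ) :
    MeasurableSet (bergmanBall n a r) :=
  measurableSet_ball.inter <| measurableSet_lt measurable_const <|
    .div (by fun_prop) (by fun_prop : Continuous fun z : Cn n => ‖1 - inner ℂ z a‖ ^ 2).measurable

theorem stmt16_general (n : ℕ) (t : ℝ) (ht : 0 < t) (N : ℕ)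
    (a : ℕ → Cn n) (hcover : Bn n ⊆ ⋃ k, bergmanBall n (a k) t)
    (hoverlap : ∀ z ∈ Bn n, {k | z ∈ bergmanBall n (a k) (4 * t)}.Finite ∧
      {k | z ∈ bergmanBall n (a k) (4 * t)}.ncard ≤ N)
    (μ : Measure (Cn n)) (hfin : IsFiniteMeasure μ) :
    μ (Bn n) ≤ (N : ℝ≥0∞) * ∑' k : {k : ℕ // 0 < μ (bergmanBall n (a k) (4 * t))},
      μ (bergmanBall n (a (k : ℕ)) (2 * t)) ^ 2 / μ (bergmanBall n (a (k : ℕ)) (4 * t)) := by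
  refine ENNReal.le_mul_tsum_sq_div_of_tsum_le (b := fun k => μ (bergmanBall n (a k) (2 * t)))
    (c := fun k => μ (bergmanBall n (a k) (4 * t))) (measure_ne_top μ _) (ENNReal.natCast_ne_top N)
    (fun k => measure_mono (bergmanBall_mono n (a k) (by positivity) (by linarith))) ?_ ?_
  · calc μ (Bn n) ≤ μ (⋃ k, bergmanBall n (a k) t) := measure_mono hcover
      _ ≤ ∑' k, μ (bergmanBall n (a k) t) := measure_iUnion_le _
      _ ≤ ∑' k, μ (bergmanBall n (a k) (2 * t)) := ENNReal.tsum_le_tsum fun k =>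
          measure_mono (bergmanBall_mono n (a k) ht.le (by linarith))
  · refine tsum_measure_le_mul_of_encard_le μ (fun k => measurableSet_bergmanBall n (a k) _)
      (fun k => bergmanBall_subset_Bn n (a k) _) fun z hz => ?_
    obtain ⟨hfinite, hcard⟩ := hoverlap z hz
    rw [← hfinite.cast_ncard_eq]
    exact_mod_cast hcard

theorem stmt16 (n : ℕ) (hn : 1 ≤ n) (t : ℝ) (ht : 0 < t) (N : ℕ) (hN : 0 < N)
    (a : ℕ → Cn n) (hcover : Bn n ⊆ ⋃ k, bergmanBall n (a k) t)
    (hoverlap : ∀ z ∈ Bn n, {k | z ∈ bergmanBall n (a k) (4 * t)}.Finite ∧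
      {k | z ∈ bergmanBall n (a k) (4 * t)}.ncard ≤ N)
    (μ : Measure (Cn n)) (hfin : IsFiniteMeasure μ) :
    μ (Bn n) ≤ (N : ℝ≥0∞) * ∑' k : {k : ℕ // 0 < μ (bergmanBall n (a k) (4 * t))},
      μ (bergmanBall n (a (k : ℕ)) (2 * t)) ^ 2 / μ (bergmanBall n (a (k : ℕ)) (4 * t)) :=
  stmt16_general n t ht N a hcover hoverlap μ hfin
end
end
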